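/- arXiv:2406.19239 — 2 statements merged into one kernel-verified Lean document; each statement's English description precedes it below -/
import Mathlib

section
/- Let A be a real m×n matrix, b ∈ ℝ^m and η ≥ 0. If x# ∈ ℝ^n is the unique minimizer of the ℓ¹-norm ‖x‖₁ over the feasible set {x ∈ ℝ^n : ‖Ax − b‖₂ ≤ η}, then x# is rank(A)-sparse, i.e. the number of nonzero entries of x# is at most the rank of A. -/
/-!
If the support `S` of `x#` had more than `rank A` elements, the columns of `A` indexed by `S` would
be linearly dependent, giving `v ≠ 0` in `ker A` supported in `S`. Every `x# + t • v` is feasible,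
and for small `|t|` no coordinate of `x#` changes sign, so `‖x# + t • v‖₁` is affine in `t` there.
Minimality at `t = 0` forces its slope to vanish, producing a second minimizer.
-/

noncomputable def l1 {d : ℕ} (y : Fin d → ℝ) : ℝ := ∑ j, |y j|

noncomputable def l2 {d : ℕ} (y : Fin d → ℝ) : ℝ := Real.sqrt (∑ j, (y j) ^ 2)

open Filter Topology Matrix

theorem Matrix.exists_ne_zero_mulVec_eq_zero_support_subset {K m n : Type*} [Field K] [Fintype n]
    (A : Matrix m n K) {s : Set n} (hs : A.rank < s.ncard) :
    ∃ v : n → K, v ≠ 0 ∧ A *ᵥ v = 0 ∧ Function.support v ⊆ s := by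
  classical
  have hdep : ¬ LinearIndepOn K A.col s := fun hli => by
    have hcard := linearIndependent_iff_card_le_finrank_span.1 hli.linearIndependent
    have := FiniteDimensional.span_of_finite K (Set.finite_range A.col)
    have hmono := Submodule.finrank_mono (R := K)
      (Submodule.span_mono (Set.range_comp_subset_range ((↑) : s → n) A.col))
    rw [← Nat.card_coe_set_eq, Nat.card_eq_fintype_card, A.rank_eq_finrank_span_cols] at hs
    exact hs.not_ge (hcard.trans hmono)
  obtain ⟨f, hfs, hf0, hf⟩ := linearDepOn_iff'.1 hdep
  refine ⟨f, fun h => hf (DFunLike.coe_injective h), ?_, fun j hj => hfs (by simpa using hj)⟩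
  rw [← hf0, Finsupp.linearCombination_apply, Finsupp.sum_fintype _ _ (by simp),
    Matrix.mulVec_eq_sum]
  simp only [op_smul_eq_smul]
  rfl

theorem abs_add_eq_abs_add_sign_mul {a c : ℝ} (h : |c| ≤ |a|) :
    |a + c| = |a| + Real.sign a * c := by
  obtain ⟨hc₁, hc₂⟩ := abs_le.1 h
  rcases lt_trichotomy a 0 with ha | rfl | ha
  · rw [abs_of_neg ha] at hc₁ hc₂
    rw [Real.sign_of_neg ha, abs_of_neg ha, abs_of_nonpos (by linarith)]
    ring
  · simp [le_antisymm (by simpa using hc₂) (by simpa using hc₁)]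
  · rw [abs_of_pos ha] at hc₁ hc₂
    rw [Real.sign_of_pos ha, abs_of_pos ha, abs_of_nonneg (by linarith)]
    ring

theorem l1_add_smul_eventuallyEq {d : ℕ} {x v : Fin d → ℝ}
    (hv : Function.support v ⊆ Function.support x) :
    ∀ᶠ t in 𝓝 (0 : ℝ), l1 (x + t • v) = l1 x + t * ∑ j, Real.sign (x j) * v j := by
  have hsmall : ∀ᶠ t in 𝓝 (0 : ℝ), ∀ j, |t * v j| ≤ |x j| := eventually_all.2 fun j => by
    by_cases hvj : v j = 0
    · simp [hvj]
    have hlim : Tendsto (fun t : ℝ => |t * v j|) (𝓝 0) (𝓝 0) := by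
      simpa using ((continuous_id.mul continuous_const).abs.tendsto (0 : ℝ))
    exact hlim.eventually (eventually_le_nhds (abs_pos.2 (hv hvj)))
  filter_upwards [hsmall] with t ht
  simp only [l1, Pi.add_apply, Pi.smul_apply, smul_eq_mul, abs_add_eq_abs_add_sign_mul (ht _),
    Finset.sum_add_distrib, Finset.mul_sum]
  congr 1
  exact Finset.sum_congr rfl fun j _ => by ring

theorem exists_ne_zero_l1_add_smul_eq {d : ℕ} {x v : Fin d → ℝ}
    (hv : Function.support v ⊆ Function.support x) (hmin : ∀ t : ℝ, l1 x ≤ l1 (x + t • v)) :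
    ∃ t : ℝ, t ≠ 0 ∧ l1 (x + t • v) = l1 x := by
  obtain ⟨ε, hε, hball⟩ := Metric.eventually_nhds_iff.1 (l1_add_smul_eventuallyEq hv)
  set L := ∑ j, Real.sign (x j) * v j
  have hpos := hball (y := ε / 2) (by rw [Real.dist_0_eq_abs, abs_of_pos (by positivity)]; linarith)
  have hneg := hball (y := -(ε / 2))
    (by rw [Real.dist_0_eq_abs, abs_neg, abs_of_pos (by positivity)]; linarith)
  have hslope : ε / 2 * L = 0 := by linarith [hmin (ε / 2), hmin (-(ε / 2))]
  exact ⟨ε / 2, by positivity, by rw [hpos, hslope, add_zero]⟩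

theorem stmt_0_general {m n : ℕ} (A : Matrix (Fin m) (Fin n) ℝ) (b : Fin m → ℝ)
    (η : ℝ) (xsharp : Fin n → ℝ)
    (hfeas : l2 (A.mulVec xsharp - b) ≤ η)
    (hmin : ∀ x : Fin n → ℝ, l2 (A.mulVec x - b) ≤ η → l1 xsharp ≤ l1 x)
    (huniq : ∀ x : Fin n → ℝ, l2 (A.mulVec x - b) ≤ η → l1 x = l1 xsharp → x = xsharp) :
    {j : Fin n | xsharp j ≠ 0}.ncard ≤ A.rank := by
  by_contra! hrank
  obtain ⟨v, hv, hAv, hsupp⟩ := A.exists_ne_zero_mulVec_eq_zero_support_subset hrank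
  have hline : ∀ t : ℝ, l2 (A *ᵥ (xsharp + t • v) - b) ≤ η := fun t => by
    rwa [mulVec_add, mulVec_smul, hAv, smul_zero, add_zero]
  obtain ⟨t, ht, hl1⟩ := exists_ne_zero_l1_add_smul_eq hsupp fun t => hmin _ (hline t)
  exact smul_ne_zero ht hv (add_eq_left.1 (huniq _ (hline t) hl1))

/-- If `x#` is the unique minimizer of the ℓ¹-norm over the feasible set
`{x : ‖Ax − b‖₂ ≤ η}`, then `x#` is `rank(A)`-sparse. -/
theorem stmt_0 {m n : ℕ} (A : Matrix (Fin m) (Fin n) ℝ) (b : Fin m → ℝ)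
    (η : ℝ) (hη : 0 ≤ η) (xsharp : Fin n → ℝ)
    (hfeas : l2 (A.mulVec xsharp - b) ≤ η)
    (hmin : ∀ x : Fin n → ℝ, l2 (A.mulVec x - b) ≤ η → l1 xsharp ≤ l1 x)
    (huniq : ∀ x : Fin n → ℝ, l2 (A.mulVec x - b) ≤ η → l1 x = l1 xsharp → x = xsharp) :
    {j : Fin n | xsharp j ≠ 0}.ncard ≤ A.rank :=
  stmt_0_general A b η xsharp hfeas hmin huniq
end

section
/- Let A be a real m×n matrix, b ∈ ℝ^m and η > 0, and assume the strict feasibility (Slater) condition: there exists x₀ ∈ ℝ^n with ‖Ax₀ − b‖₂ < η. If x# minimizes ‖x‖₁ over {x ∈ ℝ^n : ‖Ax − b‖₂ ≤ η}, then there exists λ ≥ 0 such that x# also minimizes the unconstrained functional x ↦ (1/2)‖x‖₁ + (λ/2)‖Ax − b‖₂² over ℝ^n. -/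
section ConvexProgram

variable {E : Type*} [AddCommGroup E] [Module ℝ E] {s : Set E} {f g : E → ℝ} {c : ℝ} {x' : E}

theorem IsMinOn.div_le_div_of_convexOn (hmin : IsMinOn f (s ∩ {x | g x ≤ c}) x')
    (hf : ConvexOn ℝ s f) (hg : ConvexOn ℝ s g) {u v : E} (hu : u ∈ s) (hv : v ∈ s)
    (hgu : c < g u) (hgv : g v < c) :
    (f x' - f u) / (g u - c) ≤ (f v - f x') / (c - g v) := by
  have hd : 0 < g u - g v := by linarith
  -- The weight `t` makes the convexity bound on `g` equal to `c`, so the combination is feasible.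
  set t := (g u - c) / (g u - g v)
  have ht0 : 0 ≤ t := div_nonneg (by linarith) hd.le
  have ht1 : 0 ≤ 1 - t := by
    rw [one_sub_div hd.ne']
    exact div_nonneg (by linarith) hd.le
  have hz : (1 - t) • u + t • v ∈ s := hf.1 hu hv ht1 ht0 (sub_add_cancel 1 t)
  have hgz : g ((1 - t) • u + t • v) ≤ c := by
    calc g ((1 - t) • u + t • v) ≤ (1 - t) * g u + t * g v :=
          hg.2 hu hv ht1 ht0 (sub_add_cancel 1 t)
      _ = c := by simp only [t]; field_simp; ring
  have hfz : f x' ≤ (1 - t) * f u + t * f v :=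
    (isMinOn_iff.1 hmin _ ⟨hz, hgz⟩).trans (hf.2 hu hv ht1 ht0 (sub_add_cancel 1 t))
  have hcross : (g u - g v) * f x' ≤ (c - g v) * f u + (g u - c) * f v := by
    have := mul_le_mul_of_nonneg_left hfz hd.le
    simp only [t] at this
    field_simp at this
    linarith
  rw [div_le_div_iff₀ (by linarith) (by linarith)]
  linarith

theorem IsMinOn.exists_lagrange_multiplier (hmin : IsMinOn f (s ∩ {x | g x ≤ c}) x')
    (hf : ConvexOn ℝ s f) (hg : ConvexOn ℝ s g) {x₀ : E} (hx₀ : x₀ ∈ s) (hslater : g x₀ < c) :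
    ∃ lam, 0 ≤ lam ∧ ∀ x ∈ s, f x' ≤ f x + lam * (g x - c) := by
  set P : Set ℝ := insert 0 ((fun u => (f x' - f u) / (g u - c)) '' (s ∩ {u | c < g u}))
  have hP_le : ∀ v ∈ s, g v < c → ∀ p ∈ P, p ≤ (f v - f x') / (c - g v) := by
    rintro v hv hgv p (rfl | ⟨u, ⟨hu, hgu⟩, rfl⟩)
    · exact div_nonneg (sub_nonneg.2 (isMinOn_iff.1 hmin v ⟨hv, hgv.le⟩)) (by linarith)
    · exact hmin.div_le_div_of_convexOn hf hg hu hv hgu hgv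
  have hbdd : BddAbove P := ⟨_, hP_le x₀ hx₀ hslater⟩
  refine ⟨sSup P, le_csSup hbdd (Set.mem_insert 0 _), fun x hx => ?_⟩
  rcases lt_trichotomy (g x) c with hgx | hgx | hgx
  · have := csSup_le (Set.insert_nonempty _ _) (hP_le x hx hgx)
    rw [le_div_iff₀ (by linarith)] at this
    linarith
  · simpa [hgx] using isMinOn_iff.1 hmin x ⟨hx, hgx.le⟩
  · have := le_csSup hbdd (Set.mem_insert_of_mem 0 ⟨x, ⟨hx, hgx⟩, rfl⟩)
    rw [div_le_iff₀ (by linarith)] at this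
    linarith

end ConvexProgram

theorem l1_eq_norm {d : ℕ} (y : Fin d → ℝ) : l1 y = ‖WithLp.toLp 1 y‖ := by
  simp [l1, PiLp.norm_eq_of_L1]

theorem l2_eq_norm {d : ℕ} (y : Fin d → ℝ) :
    l2 y = ‖(WithLp.toLp 2 y : EuclideanSpace ℝ (Fin d))‖ := by
  simp [l2, EuclideanSpace.norm_eq]

theorem convexOn_l1 {d : ℕ} : ConvexOn ℝ Set.univ (l1 : (Fin d → ℝ) → ℝ) := by
  have h := (convexOn_univ_norm (E := PiLp 1 fun _ : Fin d => ℝ)).comp_linearMap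
    (WithLp.linearEquiv 1 ℝ (Fin d → ℝ)).symm.toLinearMap
  simpa [Function.comp_def, ← l1_eq_norm] using h

theorem convexOn_l2_sq_residual {m n : ℕ} (A : Matrix (Fin m) (Fin n) ℝ) (b : Fin m → ℝ) :
    ConvexOn ℝ Set.univ fun x => l2 (A.mulVec x - b) ^ 2 := by
  let φ : (Fin n → ℝ) →ᵃ[ℝ] EuclideanSpace ℝ (Fin m) :=
    ((WithLp.linearEquiv 2 ℝ (Fin m → ℝ)).symm.toLinearMap ∘ₗ A.mulVecLin).toAffineMap -
      AffineMap.const ℝ _ (WithLp.toLp 2 b)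
  have h := ((convexOn_univ_norm (E := EuclideanSpace ℝ (Fin m))).pow
    (fun _ _ => norm_nonneg _) 2).comp_affineMap φ
  have hφ : ∀ x, ‖φ x‖ = l2 (A.mulVec x - b) := fun x => by
    rw [l2_eq_norm]; rfl
  simpa [Function.comp_def, hφ] using h

theorem stmt_1_general {m n : ℕ} (A : Matrix (Fin m) (Fin n) ℝ) (b : Fin m → ℝ)
    (η : ℝ)
    (slater : ∃ x₀ : Fin n → ℝ, l2 (A.mulVec x₀ - b) < η)
    (xsharp : Fin n → ℝ)
    (hfeas : l2 (A.mulVec xsharp - b) ≤ η)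
    (hmin : ∀ x : Fin n → ℝ, l2 (A.mulVec x - b) ≤ η → l1 xsharp ≤ l1 x) :
    ∃ lam : ℝ, 0 ≤ lam ∧
      ∀ x : Fin n → ℝ,
        (1 / 2) * l1 xsharp + (lam / 2) * (l2 (A.mulVec xsharp - b)) ^ 2 ≤
          (1 / 2) * l1 x + (lam / 2) * (l2 (A.mulVec x - b)) ^ 2 := by
  obtain ⟨x₀, hx₀⟩ := slater
  have hη : 0 ≤ η := (Real.sqrt_nonneg _).trans hx₀.le
  have hsq_le : ∀ x, l2 (A.mulVec x - b) ≤ η ↔ l2 (A.mulVec x - b) ^ 2 ≤ η ^ 2 := fun x =>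
    (pow_le_pow_iff_left₀ (Real.sqrt_nonneg _) hη two_ne_zero).symm
  have hmin' : IsMinOn l1 (Set.univ ∩ {x | l2 (A.mulVec x - b) ^ 2 ≤ η ^ 2}) xsharp :=
    isMinOn_iff.2 fun x hx => hmin x ((hsq_le x).2 hx.2)
  obtain ⟨lam, hlam, hlagrange⟩ := hmin'.exists_lagrange_multiplier convexOn_l1
    (convexOn_l2_sq_residual A b) (Set.mem_univ x₀)
    (pow_lt_pow_left₀ hx₀ (Real.sqrt_nonneg _) two_ne_zero)
  refine ⟨lam, hlam, fun x => ?_⟩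
  have hx := hlagrange x (Set.mem_univ x)
  have hslack := mul_le_mul_of_nonneg_left ((hsq_le xsharp).1 hfeas) hlam
  linarith

/-- Under the Slater condition, a minimizer of the constrained LASSO is also a
minimizer of the unconstrained LASSO `x ↦ (1/2)‖x‖₁ + (λ/2)‖Ax − b‖₂²` for
some `λ ≥ 0`. -/
theorem stmt_1 {m n : ℕ} (A : Matrix (Fin m) (Fin n) ℝ) (b : Fin m → ℝ)
    (η : ℝ) (hη : 0 < η)
    (slater : ∃ x₀ : Fin n → ℝ, l2 (A.mulVec x₀ - b) < η)
    (xsharp : Fin n → ℝ)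
    (hfeas : l2 (A.mulVec xsharp - b) ≤ η)
    (hmin : ∀ x : Fin n → ℝ, l2 (A.mulVec x - b) ≤ η → l1 xsharp ≤ l1 x) :
    ∃ lam : ℝ, 0 ≤ lam ∧
      ∀ x : Fin n → ℝ,
        (1 / 2) * l1 xsharp + (lam / 2) * (l2 (A.mulVec xsharp - b)) ^ 2 ≤
          (1 / 2) * l1 x + (lam / 2) * (l2 (A.mulVec x - b)) ^ 2 :=
  stmt_1_general A b η slater xsharp hfeas hmin
end
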